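/- arXiv:1804.08062 — 3 statements merged into one kernel-verified Lean document; each statement's English description precedes it below -/
import Mathlib

section
/- Let n ≥ 1 be a natural number and let α, F be real numbers with 0 < α ≤ 1 and 0 < F ≤ 1. Then ∑_{t=1}^{n} (α/n)·(1 − αF/n)^{t−1} ≥ 1 − (1 − α/n)^n, and moreover 1 − (1 − α/n)^n > 1 − e^{−α}. -/
/-! The first sum is a geometric series of ratio `1 - αF/n`; lowering the ratio to `1 - α/n`
can only decrease it, and the resulting series sums to `1 - (1 - α/n)^n`. The second claim is
the strict form of `(1 - α/n)^n ≤ e^{-α}`, coming from `1 - x < e^{-x}` for `x ≠ 0`. -/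

open Finset Real

theorem Finset.sum_Icc_one_comp_sub_one {M : Type*} [AddCommMonoid M] (f : ℕ → M) (n : ℕ) :
    ∑ t ∈ Icc 1 n, f (t - 1) = ∑ k ∈ range n, f k := by
  rw [← Ico_add_one_right_eq_Icc, sum_Ico_eq_sum_range]
  simp

theorem one_sub_pow_le_sum_mul_pow {a b : ℝ} (ha₀ : 0 ≤ a) (ha₁ : a ≤ 1) (hba : b ≤ a) (n : ℕ) :
    1 - (1 - a) ^ n ≤ ∑ k ∈ range n, a * (1 - b) ^ k := by
  rw [← mul_neg_geom_sum, sub_sub_cancel, mul_sum]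
  gcongr

theorem one_sub_div_pow_lt_exp_neg {n : ℕ} {x : ℝ} (hn : n ≠ 0) (hx₀ : 0 < x) (hxn : x ≤ n) :
    (1 - x / n) ^ n < exp (-x) :=
  calc (1 - x / n) ^ n < exp (-(x / n)) ^ n := by
        gcongr
        · exact sub_nonneg.2 <| div_le_one_of_le₀ hxn n.cast_nonneg
        · linarith [add_one_lt_exp (neg_ne_zero.2 (by positivity : x / n ≠ 0))]
    _ = exp (-x) := by rw [← exp_nat_mul]; field_simp

theorem stmt_0_general (n : ℕ) (hn : 1 ≤ n) (α F : ℝ)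
    (hα0 : 0 < α) (hα1 : α ≤ 1) (hF1 : F ≤ 1) :
    (∑ t ∈ Finset.Icc 1 n, (α / n) * (1 - α * F / n) ^ (t - 1))
      ≥ 1 - (1 - α / n) ^ n ∧
    1 - (1 - α / n) ^ n > 1 - Real.exp (-α) := by
  have hαn : α ≤ n := hα1.trans (by exact_mod_cast hn)
  refine ⟨?_, by linarith [one_sub_div_pow_lt_exp_neg (by omega) hα0 hαn]⟩
  rw [ge_iff_le, sum_Icc_one_comp_sub_one (fun k ↦ α / n * (1 - α * F / n) ^ k)]
  refine one_sub_pow_le_sum_mul_pow (by positivity) (div_le_one_of_le₀ hαn n.cast_nonneg) ?_ n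
  gcongr
  exact mul_le_of_le_one_right hα0.le hF1

theorem stmt_0 (n : ℕ) (hn : 1 ≤ n) (α F : ℝ)
    (hα0 : 0 < α) (hα1 : α ≤ 1) (hF0 : 0 < F) (hF1 : F ≤ 1) :
    (∑ t ∈ Finset.Icc 1 n, (α / n) * (1 - α * F / n) ^ (t - 1))
      ≥ 1 - (1 - α / n) ^ n ∧
    1 - (1 - α / n) ^ n > 1 - Real.exp (-α) :=
  stmt_0_general n hn α F hα0 hα1 hF1
end

section
/- Let γ^{(n)} be the sequence defined for each n ≥ 1 by γ^{(n)}_1 = 1 and γ^{(n)}_{t+1} = γ^{(n)}_t·(1 − (1 − γ^{(n)}_t/2)/n). Then the sums (1/n)·∑_{t=1}^{n} γ^{(n)}_t·(1 − γ^{(n)}_t/2) converge, as n → ∞, to 1 − 2/(1 + e) = (e − 1)/(e + 1). -/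
open Filter Topology

/-!
In the coordinate `v = 2 / γ - 1` one step of the recursion multiplies `v` by
`1 + 2 / (2n - 2 + γ)`, which lies between `1 + 1/n` and `1 + 1/(n - 1)` as long as
`0 < γ ≤ 2`. Starting from `v₁ = 1`, after `n` steps `v` is squeezed between
`(1 + 1/n)^n` and `(1 + 1/(n-1))^n`, so it tends to `e` and `γ_{n+1} → 2 / (1 + e)`.
The sum telescopes because `γ_t (1 - γ_t / 2) = n (γ_t - γ_{t+1})`, so the mean equals
`1 - γ_{n+1}`.
-/

lemma attenuation_step_pos {n g : ℝ} (hn : 1 ≤ n) (hg : 0 < g) :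
    0 < g * (1 - (1 - g / 2) / n) := by
  have : (1 - g / 2) / n < 1 := by rw [div_lt_one (by linarith)]; linarith
  exact mul_pos hg (by linarith)

lemma attenuation_step_le {n g : ℝ} (hn : 1 ≤ n) (hg : 0 ≤ g) (hg2 : g ≤ 2) :
    g * (1 - (1 - g / 2) / n) ≤ g := by
  have : 0 ≤ (1 - g / 2) / n := div_nonneg (by linarith) (by linarith)
  nlinarith

lemma two_div_attenuation_step_sub_one {n g : ℝ} (hn : 1 ≤ n) (hg : 0 < g) :
    2 / (g * (1 - (1 - g / 2) / n)) - 1 = (2 / g - 1) * (1 + 2 / (2 * n - 2 + g)) := by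
  have hd : 2 * n - 2 + g ≠ 0 := by linarith
  have : n ≠ 0 := by linarith
  rw [show 1 - (1 - g / 2) / n = (2 * n - 2 + g) / (2 * n) by field_simp; ring,
    div_sub_one, div_sub_one hg.ne', one_add_div hd]
  · field_simp
    ring
  · positivity

lemma one_add_one_div_le_one_add_two_div {n g : ℝ} (hn : 1 ≤ n) (hg : 0 < g) (hg2 : g ≤ 2) :
    1 + 1 / n ≤ 1 + 2 / (2 * n - 2 + g) := by
  rw [show 1 / n = 2 / (2 * n) by field_simp]
  gcongr
  · linarith
  · linarith

lemma one_add_two_div_le_one_add_one_div_sub_one {n g : ℝ} (hn : 1 < n) (hg : 0 ≤ g) :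
    1 + 2 / (2 * n - 2 + g) ≤ 1 + 1 / (n - 1) := by
  rw [show 1 / (n - 1) = 2 / (2 * n - 2) by field_simp]
  gcongr
  · linarith
  · linarith

lemma tendsto_one_add_one_div_sub_one_pow_exp :
    Tendsto (fun n : ℕ ↦ (1 + 1 / ((n : ℝ) - 1)) ^ n) atTop (𝓝 (Real.exp 1)) := by
  refine Real.tendsto_one_add_pow_exp_of_tendsto ?_
  have hinv : Tendsto (fun n : ℕ ↦ 1 / ((n : ℝ) - 1)) atTop (𝓝 0) := by
    simpa only [one_div, sub_eq_add_neg, Function.comp_def] using tendsto_inv_atTop_zero.comp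
      (tendsto_atTop_add_const_right _ (-1) tendsto_natCast_atTop_atTop)
  have hlim : Tendsto (fun n : ℕ ↦ 1 + 1 / ((n : ℝ) - 1)) atTop (𝓝 1) := by
    simpa using tendsto_const_nhds.add hinv
  refine hlim.congr' ?_
  filter_upwards [eventually_ge_atTop 2] with n hn
  have : (n : ℝ) - 1 ≠ 0 := by
    have : (2 : ℝ) ≤ n := by exact_mod_cast hn
    linarith
  field_simp
  ring

section Sequence

variable {γ : ℕ → ℝ} {n : ℕ}

lemma attenuation_pos_and_le_one (hn : 1 ≤ n) (hγ1 : γ 1 = 1)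
    (hrec : ∀ t, 1 ≤ t → γ (t + 1) = γ t * (1 - (1 - γ t / 2) / n)) :
    ∀ t, 1 ≤ t → 0 < γ t ∧ γ t ≤ 1 := by
  have hn' : (1 : ℝ) ≤ n := by exact_mod_cast hn
  intro t ht
  induction t, ht using Nat.le_induction with
  | base => simp [hγ1]
  | succ t ht ih =>
    rw [hrec t ht]
    exact ⟨attenuation_step_pos hn' ih.1,
      (attenuation_step_le hn' ih.1.le (by linarith [ih.2])).trans ih.2⟩

lemma mean_attenuation_eq_one_sub (hn : 1 ≤ n) (hγ1 : γ 1 = 1)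
    (hrec : ∀ t, 1 ≤ t → γ (t + 1) = γ t * (1 - (1 - γ t / 2) / n)) :
    (1 / (n : ℝ)) * ∑ t ∈ Finset.Icc 1 n, γ t * (1 - γ t / 2) = 1 - γ (n + 1) := by
  have hn0 : (n : ℝ) ≠ 0 := by positivity
  have hterm : ∀ t ∈ Finset.Icc 1 n, γ t * (1 - γ t / 2) = -n * (γ (t + 1) - γ t) := by
    intro t ht
    rw [hrec t (Finset.mem_Icc.mp ht).1]
    field_simp
    ring
  rw [Finset.sum_congr rfl hterm, ← Finset.mul_sum, Finset.sum_Icc_sub (by omega), hγ1]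
  field_simp
  ring

lemma pow_le_two_div_attenuation_sub_one_le_pow (hn : 2 ≤ n) (hγ1 : γ 1 = 1)
    (hrec : ∀ t, 1 ≤ t → γ (t + 1) = γ t * (1 - (1 - γ t / 2) / n)) (t : ℕ) :
    (1 + 1 / (n : ℝ)) ^ t ≤ 2 / γ (t + 1) - 1 ∧
      2 / γ (t + 1) - 1 ≤ (1 + 1 / ((n : ℝ) - 1)) ^ t := by
  have hn' : (2 : ℝ) ≤ n := by exact_mod_cast hn
  have hbound := attenuation_pos_and_le_one (by omega) hγ1 hrec
  have hstep : ∀ k, 2 / γ (k + 1 + 1) - 1 =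
      (2 / γ (k + 1) - 1) * (1 + 2 / (2 * n - 2 + γ (k + 1))) := fun k ↦ by
    rw [hrec (k + 1) (by omega),
      two_div_attenuation_step_sub_one (by linarith) (hbound _ (by omega)).1]
  have hnonneg : ∀ k, 0 ≤ 2 / γ (k + 1) - 1 := fun k ↦ by
    obtain ⟨hpos, hle⟩ := hbound (k + 1) (by omega)
    rw [sub_nonneg, le_div_iff₀ hpos]
    linarith
  have hu0 : 2 / γ (0 + 1) - 1 = 1 := by norm_num [hγ1]
  constructor
  · simpa only [hu0, mul_one] using geom_le (u := fun k ↦ 2 / γ (k + 1) - 1)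
      (c := 1 + 1 / (n : ℝ)) (by positivity) t fun k _ ↦ by
        obtain ⟨hpos, hle⟩ := hbound (k + 1) (by omega)
        rw [hstep, mul_comm]
        exact mul_le_mul_of_nonneg_left
          (one_add_one_div_le_one_add_two_div (n := n) (by linarith) hpos (by linarith)) (hnonneg k)
  · simpa only [hu0, mul_one] using le_geom (u := fun k ↦ 2 / γ (k + 1) - 1)
      (c := 1 + 1 / ((n : ℝ) - 1)) (by linarith [one_div_pos.2 (by linarith : (0 : ℝ) < n - 1)])
      t fun k _ ↦ by
        rw [hstep, mul_comm]
        exact mul_le_mul_of_nonneg_right (one_add_two_div_le_one_add_one_div_sub_one (n := n)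
          (by linarith) (hbound (k + 1) (by omega)).1.le) (hnonneg k)

end Sequence

lemma tendsto_attenuation_succ_self (γ : ℕ → ℕ → ℝ) (hγ1 : ∀ n, γ n 1 = 1)
    (hrec : ∀ n : ℕ, 1 ≤ n → ∀ t : ℕ, 1 ≤ t →
      γ n (t + 1) = γ n t * (1 - (1 - γ n t / 2) / n)) :
    Tendsto (fun n ↦ γ n (n + 1)) atTop (𝓝 (2 / (1 + Real.exp 1))) := by
  have hv : Tendsto (fun n ↦ 2 / γ n (n + 1) - 1) atTop (𝓝 (Real.exp 1)) := by
    refine tendsto_of_tendsto_of_tendsto_of_le_of_le' (Real.tendsto_one_add_div_pow_exp 1)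
      tendsto_one_add_one_div_sub_one_pow_exp ?_ ?_ <;>
    filter_upwards [eventually_ge_atTop 2] with n hn
    · exact (pow_le_two_div_attenuation_sub_one_le_pow hn (hγ1 n) (hrec n (by omega)) n).1
    · exact (pow_le_two_div_attenuation_sub_one_le_pow hn (hγ1 n) (hrec n (by omega)) n).2
  refine (tendsto_const_nhds.div (tendsto_const_nhds.add hv) (by positivity)).congr fun n ↦ ?_
  show 2 / (1 + (2 / γ n (n + 1) - 1)) = γ n (n + 1)
  rw [add_sub_cancel, div_div_cancel₀ two_ne_zero]

open Filter in
theorem stmt_10 (γ : ℕ → ℕ → ℝ)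
    (hγ1 : ∀ n : ℕ, γ n 1 = 1)
    (hrec : ∀ n : ℕ, 1 ≤ n → ∀ t : ℕ, 1 ≤ t →
      γ n (t + 1) = γ n t * (1 - (1 - γ n t / 2) / n)) :
    Tendsto
      (fun n : ℕ => (1 / (n : ℝ)) * ∑ t ∈ Finset.Icc 1 n, γ n t * (1 - γ n t / 2))
      atTop (nhds (1 - 2 / (1 + Real.exp 1))) ∧
    1 - 2 / (1 + Real.exp 1) = (Real.exp 1 - 1) / (Real.exp 1 + 1) := by
  constructor
  · refine (tendsto_const_nhds.sub (tendsto_attenuation_succ_self γ hγ1 hrec)).congr' ?_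
    filter_upwards [eventually_ge_atTop 1] with n hn
    exact (mean_attenuation_eq_one_sub hn (hγ1 n) (hrec n hn)).symm
  · field_simp
    ring
end

section
/- Let β, ε, μ, μ̂ be real numbers with 0 < β ≤ 1, 0 < ε ≤ β/2, ε < 1, μ ≥ β − ε, and |μ̂ − μ| ≤ ε·μ. Define σ = β/μ̂ if μ̂ ≥ β and σ = 1 otherwise. Then β − ε ≤ σ·μ ≤ β/(1 − ε). -/
noncomputable def attenuation (β μhat : ℝ) : ℝ :=
  if μhat ≥ β then β / μhat else 1

lemma attenuation_mul_le_div {β ε μ μhat : ℝ} (hβ : 0 < β) (hε : ε < 1)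
    (hlow : (1 - ε) * μ ≤ μhat) :
    attenuation β μhat * μ ≤ β / (1 - ε) := by
  have hε' : 0 < 1 - ε := sub_pos.mpr hε
  unfold attenuation
  split_ifs with h
  · have hμhat : 0 < μhat := hβ.trans_le h
    rw [div_mul_eq_mul_div, div_le_div_iff₀ hμhat hε']
    nlinarith
  · rw [one_mul, le_div_iff₀ hε']
    linarith

lemma sub_le_attenuation_mul {β ε μ μhat : ℝ} (hβ : 0 < β) (hε0 : 0 ≤ ε) (hεβ : ε ≤ β)
    (hβ1 : β ≤ 1 + ε) (hμ : β - ε ≤ μ) (hup : μhat ≤ (1 + ε) * μ) :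
    β - ε ≤ attenuation β μhat * μ := by
  unfold attenuation
  split_ifs with h
  · have hμhat : 0 < μhat := hβ.trans_le h
    -- `(β - ε)(1 + ε) ≤ β` is exactly `ε (β - 1 - ε) ≤ 0`.
    have hshrink : (β - ε) * (1 + ε) ≤ β := by nlinarith
    rw [div_mul_eq_mul_div, le_div_iff₀ hμhat]
    calc (β - ε) * μhat ≤ (β - ε) * ((1 + ε) * μ) := by gcongr
      _ = (β - ε) * (1 + ε) * μ := by ring
      _ ≤ β * μ := by gcongr; linarith
  · linarith

theorem stmt_17 (β ε μ μhat : ℝ)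
    (hβ0 : 0 < β) (hβ1 : β ≤ 1) (hε0 : 0 < ε) (hεβ : ε ≤ β / 2) (hε1 : ε < 1)
    (hμ : μ ≥ β - ε) (hest : |μhat - μ| ≤ ε * μ)
    (σ : ℝ) (hσ : σ = if μhat ≥ β then β / μhat else 1) :
    β - ε ≤ σ * μ ∧ σ * μ ≤ β / (1 - ε) := by
  obtain ⟨hup, hlow⟩ := abs_sub_le_iff.mp hest
  change σ = attenuation β μhat at hσ
  subst hσ
  exact ⟨sub_le_attenuation_mul hβ0 hε0.le (by linarith) (by linarith) hμ (by linarith),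
    attenuation_mul_le_div hβ0 hε1 (by linarith)⟩
end
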